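/- There exists a constant M > 0 such that for every integer n ≥ 1, the n-th power of the backward difference operator D on the disc algebra, defined by (Df)(z) = (f(z) - f(0))/z, has operator norm at most M(1 + log n). -/

import Mathlib

open Metric

/-- The backward difference operator `D` on functions `ℂ → ℂ`:
`(Df)(z) = (f(z) - f(0))/z` for `z ≠ 0`, and `(Df)(0) = f'(0)`. -/
noncomputable def Dop (f : ℂ → ℂ) : ℂ → ℂ :=
  fun z => if z = 0 then deriv f 0 else (f z - f 0) / z

/-!
`D` is the difference quotient `dslope · 0`, so `zⁿ Dⁿ f(z) = f(z) - Sₙ f(z)`, where `Sₙ f` is the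
`n`-th Taylor partial sum of `f` at `0`; on the unit circle `|Dⁿ f| ≤ |f| + |Sₙ f|`. Computing the
Taylor coefficients by Cauchy's formula on the unit circle itself, `Sₙ f` is the convolution of
`f` with the kernel `∑_{k<n} e^{ikt}`, which is bounded by `n` and by `π / |t|`; its `L¹` norm is
therefore at most `2π (1 + log n)`. The maximum modulus principle carries the resulting bound
`(2 + log n) ‖f‖_∞` from the circle to the closed disc.
-/

open Complex Function Finset Topology Filter
open scoped Real ComplexConjugate

section dslope

variable {E : Type*} [NormedAddCommGroup E]

theorem HasFPowerSeriesAt.pow_sub_smul_iterate_dslope {𝕜 : Type*} [NontriviallyNormedField 𝕜]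
    [NormedSpace 𝕜 E] {f : 𝕜 → E} {p : FormalMultilinearSeries 𝕜 𝕜 E} {z₀ : 𝕜}
    (hp : HasFPowerSeriesAt f p z₀) (n : ℕ) (z : 𝕜) :
    (z - z₀) ^ n • (swap dslope z₀)^[n] f z = f z - ∑ k ∈ range n, (z - z₀) ^ k • p.coeff k := by
  induction n with
  | zero => simp
  | succ n ih =>
    have hcoeff : (swap dslope z₀)^[n] f z₀ = p.coeff n := by
      rw [← (hp.has_fpower_series_iterate_dslope_fslope n).coeff_zero 1,
        ← FormalMultilinearSeries.coeff, FormalMultilinearSeries.coeff_iterate_fslope, zero_add]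
    rw [iterate_succ_apply', pow_succ', mul_comm, mul_smul, sub_smul_dslope, hcoeff, smul_sub, ih,
      sum_range_succ]
    abel

variable [NormedSpace ℂ E] [CompleteSpace E] {f : ℂ → E} {s : Set ℂ} {c : ℂ}

theorem DiffContOnCl.dslope (hf : DiffContOnCl ℂ f s) (hs : s ∈ 𝓝 c) :
    DiffContOnCl ℂ (dslope f c) s :=
  ⟨(differentiableOn_dslope hs).2 hf.1, (continuousOn_dslope (mem_of_superset hs subset_closure)).2
    ⟨hf.2, hf.1.differentiableAt hs⟩⟩

theorem DiffContOnCl.iterate_dslope (hf : DiffContOnCl ℂ f s) (hs : s ∈ 𝓝 c) (n : ℕ) :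
    DiffContOnCl ℂ ((swap _root_.dslope c)^[n] f) s := by
  induction n with
  | zero => exact hf
  | succ n ih => simpa only [iterate_succ_apply'] using ih.dslope hs

end dslope

/-- The one-sided kernel `∑_{k<n} e^{ikt}` of the Taylor partial sums, not the symmetric
`∑_{|k|≤n} e^{ikt}` of Fourier series. -/
noncomputable def dirichletKernel (n : ℕ) (t : ℝ) : ℂ :=
  ∑ k ∈ range n, exp (I * t) ^ k

namespace dirichletKernel

theorem continuous_norm (n : ℕ) : Continuous fun t => ‖dirichletKernel n t‖ := by
  unfold dirichletKernel
  fun_prop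

theorem norm_periodic (n : ℕ) : Periodic (fun t => ‖dirichletKernel n t‖) (2 * π) := by
  intro t
  simp only [dirichletKernel, ofReal_add, ofReal_mul, ofReal_ofNat, mul_add, exp_add,
    mul_comm I (2 * π : ℂ), exp_two_pi_mul_I, mul_one]

theorem norm_neg (n : ℕ) (t : ℝ) : ‖dirichletKernel n (-t)‖ = ‖dirichletKernel n t‖ := by
  have : dirichletKernel n (-t) = conj (dirichletKernel n t) := by
    simp [dirichletKernel, map_sum, ← exp_conj, map_mul, conj_I, conj_ofReal]
  rw [this, norm_conj]

theorem norm_le (n : ℕ) (t : ℝ) : ‖dirichletKernel n t‖ ≤ n := by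
  calc ‖dirichletKernel n t‖ ≤ ∑ k ∈ range n, ‖exp (I * t) ^ k‖ := norm_sum_le _ _
    _ = n := by simp [norm_exp_I_mul_ofReal]

theorem norm_le_pi_div {n : ℕ} {t : ℝ} (h0 : 0 < t) (h1 : t ≤ π) :
    ‖dirichletKernel n t‖ ≤ π / t := by
  have hsin : 2 / π * (t / 2) ≤ Real.sin (t / 2) := Real.mul_le_sin (by linarith) (by linarith)
  have hden : t / π * 2 ≤ ‖exp (I * t) - 1‖ := by
    rw [norm_exp_I_mul_ofReal_sub_one, Real.norm_eq_abs]
    refine le_trans ?_ (le_abs_self _)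
    linarith [show 2 / π * (t / 2) = t / π by ring]
  have hden_pos : 0 < t / π * 2 := by positivity
  have hnum : ‖exp (I * t) ^ n - 1‖ ≤ 2 := by
    calc ‖exp (I * t) ^ n - 1‖ ≤ ‖exp (I * t) ^ n‖ + ‖(1 : ℂ)‖ := norm_sub_le _ _
      _ = 2 := by norm_num [norm_exp_I_mul_ofReal]
  have hne : exp (I * t) ≠ 1 := fun h => by
    rw [h, sub_self, norm_zero] at hden
    linarith
  rw [dirichletKernel, geom_sum_eq hne, norm_div]
  calc ‖exp (I * t) ^ n - 1‖ / ‖exp (I * t) - 1‖ ≤ 2 / (t / π * 2) := by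
        gcongr
    _ = π / t := by field_simp

theorem intervalIntegrable_norm (n : ℕ) (a b : ℝ) :
    IntervalIntegrable (fun t => ‖dirichletKernel n t‖) MeasureTheory.volume a b :=
  (continuous_norm n).intervalIntegrable a b

theorem integral_norm_le {n : ℕ} (hn : 1 ≤ n) :
    ∫ t in -π..π, ‖dirichletKernel n t‖ ≤ 2 * π * (1 + Real.log n) := by
  have hn' : (1 : ℝ) ≤ n := by exact_mod_cast hn
  have hpn : 0 < π / n := by positivity
  have hpn_le : π / n ≤ π := div_le_self Real.pi_pos.le hn'
  have hsymm : ∫ t in -π..0, ‖dirichletKernel n t‖ = ∫ t in 0..π, ‖dirichletKernel n t‖ := by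
    simpa [norm_neg] using (intervalIntegral.integral_comp_neg
      (a := 0) (b := π) fun t => ‖dirichletKernel n t‖).symm
  have hnear : ∫ t in 0..π / n, ‖dirichletKernel n t‖ ≤ π := by
    calc ∫ t in 0..π / n, ‖dirichletKernel n t‖ ≤ ∫ _ in 0..π / n, (n : ℝ) :=
          intervalIntegral.integral_mono_on hpn.le (intervalIntegrable_norm n _ _)
            intervalIntegrable_const fun t _ => norm_le n t
      _ = π := by simp; field_simp
  have hfar : ∫ t in π / n..π, ‖dirichletKernel n t‖ ≤ π * Real.log n := by
    have hpos : ∀ t ∈ Set.Icc (π / n) π, 0 < t := fun t ht => hpn.trans_le ht.1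
    have hint : IntervalIntegrable (fun t => π / t) MeasureTheory.volume (π / n) π :=
      (continuousOn_const.div continuousOn_id fun t ht =>
        (hpos t (Set.uIcc_of_le hpn_le ▸ ht)).ne').intervalIntegrable
    calc ∫ t in π / n..π, ‖dirichletKernel n t‖ ≤ ∫ t in π / n..π, π / t :=
          intervalIntegral.integral_mono_on hpn_le (intervalIntegrable_norm n _ _) hint
            fun t ht => norm_le_pi_div (hpos t ht) ht.2
      _ = π * Real.log n := by
          simp_rw [div_eq_mul_inv π (_ : ℝ)]
          rw [intervalIntegral.integral_const_mul, ← div_eq_mul_inv,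
            integral_inv_of_pos hpn Real.pi_pos]
          field_simp
  rw [← intervalIntegral.integral_add_adjacent_intervals (b := 0) (intervalIntegrable_norm n _ _)
    (intervalIntegrable_norm n _ _), hsymm, ← intervalIntegral.integral_add_adjacent_intervals
    (b := π / n) (intervalIntegrable_norm n _ _) (intervalIntegrable_norm n _ _)]
  linarith

theorem integral_norm_sub_le {n : ℕ} (hn : 1 ≤ n) (φ : ℝ) :
    ∫ θ in 0..2 * π, ‖dirichletKernel n (φ - θ)‖ ≤ 2 * π * (1 + Real.log n) := by
  have hshift := (norm_periodic n).intervalIntegral_add_eq (φ - 2 * π) (-π)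
  rw [intervalIntegral.integral_comp_sub_left (fun t => ‖dirichletKernel n t‖), sub_zero]
  convert integral_norm_le hn using 1
  convert hshift using 2 <;> ring

end dirichletKernel

theorem dirichletKernel_arg_sub (n : ℕ) {z : ℂ} (hz : ‖z‖ = 1) (θ : ℝ) :
    dirichletKernel n (arg z - θ) = ∑ k ∈ range n, (z / circleMap 0 1 θ) ^ k := by
  have hz' : exp (arg z * I) = z := by simpa [hz] using norm_mul_exp_arg_mul_I z
  simp only [dirichletKernel, circleMap_zero, ofReal_one, one_mul, mul_comm I, ofReal_sub, sub_mul,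
    exp_sub, hz']

theorem sum_pow_smul_cauchyPowerSeries_coeff_eq {E : Type*} [NormedAddCommGroup E]
    [NormedSpace ℂ E] {g : ℂ → E} {c : ℂ} {R : ℝ} (hR : 0 < R) (hg : ContinuousOn g (sphere c R))
    (n : ℕ) (z : ℂ) :
    ∑ k ∈ range n, z ^ k • (cauchyPowerSeries g c R).coeff k =
      (2 * π * I)⁻¹ • ∮ w in C(c, R), (∑ k ∈ range n, (z / (w - c)) ^ k) • (w - c)⁻¹ • g w := by
  have hint : ∀ k ∈ range n,
      CircleIntegrable (fun w => (z / (w - c)) ^ k • (w - c)⁻¹ • g w) c R := by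
    intro k _
    have hw : ∀ w ∈ sphere c R, w - c ≠ 0 := fun w hw =>
      sub_ne_zero.2 (ne_of_mem_sphere hw hR.ne')
    exact ContinuousOn.circleIntegrable hR.le (by fun_prop (disch := assumption))
  simp_rw [← FormalMultilinearSeries.apply_eq_pow_smul_coeff, cauchyPowerSeries_apply, ← smul_sum,
    sum_smul, circleIntegral.integral_fun_sum hint]

theorem norm_sum_pow_smul_cauchyPowerSeries_coeff_le {g : ℂ → ℂ}
    (hg : ContinuousOn g (sphere 0 1)) {S : ℝ} (hS : ∀ w ∈ sphere (0 : ℂ) 1, ‖g w‖ ≤ S)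
    {n : ℕ} (hn : 1 ≤ n) {z : ℂ} (hz : ‖z‖ = 1) :
    ‖∑ k ∈ range n, z ^ k • (cauchyPowerSeries g 0 1).coeff k‖ ≤ (1 + Real.log n) * S := by
  have hpointwise : ∀ θ : ℝ, ‖deriv (circleMap 0 1) θ •
      (∑ k ∈ range n, (z / circleMap 0 1 θ) ^ k) • (circleMap 0 1 θ)⁻¹ • g (circleMap 0 1 θ)‖ ≤
        ‖dirichletKernel n (arg z - θ)‖ * S := by
    intro θ
    simp only [norm_smul, deriv_circleMap, norm_mul, norm_inv, norm_circleMap_zero, norm_I,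
      abs_one, one_mul, inv_one, ← dirichletKernel_arg_sub n hz]
    exact mul_le_mul_of_nonneg_left (hS _ (circleMap_mem_sphere 0 zero_le_one θ)) (norm_nonneg _)
  have hbound_int : IntervalIntegrable (fun θ => ‖dirichletKernel n (arg z - θ)‖ * S)
      MeasureTheory.volume 0 (2 * π) :=
    (((dirichletKernel.continuous_norm n).comp (continuous_sub_left _)).mul
      continuous_const).intervalIntegrable _ _
  have h2pi : ‖(2 * π * I : ℂ)⁻¹‖ = (2 * π)⁻¹ := by simp [Real.pi_pos.le]
  rw [sum_pow_smul_cauchyPowerSeries_coeff_eq one_pos hg, norm_smul, h2pi, circleIntegral]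
  simp only [sub_zero]
  calc (2 * π)⁻¹ * ‖∫ θ in 0..2 * π, deriv (circleMap 0 1) θ •
        (∑ k ∈ range n, (z / circleMap 0 1 θ) ^ k) •
          (circleMap 0 1 θ)⁻¹ • g (circleMap 0 1 θ)‖
      ≤ (2 * π)⁻¹ * ∫ θ in 0..2 * π, ‖dirichletKernel n (arg z - θ)‖ * S := by
        gcongr
        exact intervalIntegral.norm_integral_le_of_norm_le Real.two_pi_pos.le
          (Eventually.of_forall fun θ _ => hpointwise θ) hbound_int
    _ ≤ (2 * π)⁻¹ * (2 * π * (1 + Real.log n) * S) := by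
        rw [intervalIntegral.integral_mul_const]
        gcongr
        · exact (norm_nonneg _).trans (hS 1 (by simp))
        · exact dirichletKernel.integral_norm_sub_le hn _
    _ = (1 + Real.log n) * S := by field_simp

theorem Dop_eq_swap_dslope : Dop = swap dslope 0 := by
  funext f z
  simp [Dop, dslope, swap, update_apply, slope, div_eq_inv_mul]

theorem norm_Dop_iterate_le_of_norm_eq_one {f : ℂ → ℂ} (hf : DiffContOnCl ℂ f (ball 0 1))
    {S : ℝ} (hS : ∀ w ∈ sphere (0 : ℂ) 1, ‖f w‖ ≤ S) {n : ℕ} (hn : 1 ≤ n) {z : ℂ}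
    (hz : ‖z‖ = 1) : ‖Dop^[n] f z‖ ≤ (2 + Real.log n) * S := by
  have hp : HasFPowerSeriesAt f (cauchyPowerSeries f 0 1) 0 := by
    simpa using (hf.hasFPowerSeriesOnBall (R := 1) one_pos).hasFPowerSeriesAt
  have htaylor := hp.pow_sub_smul_iterate_dslope n z
  simp only [sub_zero, ← Dop_eq_swap_dslope] at htaylor
  have hpartial := norm_sum_pow_smul_cauchyPowerSeries_coeff_le
    (hf.continuousOn_ball.mono sphere_subset_closedBall) hS hn hz
  calc ‖Dop^[n] f z‖ = ‖z ^ n • Dop^[n] f z‖ := by simp [hz]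
    _ ≤ ‖f z‖ + ‖∑ k ∈ range n, z ^ k • (cauchyPowerSeries f 0 1).coeff k‖ := by
        rw [htaylor]; exact norm_sub_le _ _
    _ ≤ S + (1 + Real.log n) * S := add_le_add (hS z (by simpa using hz)) hpartial
    _ = (2 + Real.log n) * S := by ring

theorem norm_Dop_pow_le :
    ∃ M > (0 : ℝ), ∀ n : ℕ, 1 ≤ n → ∀ f : ℂ → ℂ,
      DifferentiableOn ℂ f (ball (0 : ℂ) 1) →
      ContinuousOn f (closedBall (0 : ℂ) 1) →
      ∀ z ∈ closedBall (0 : ℂ) 1,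
        ‖(Dop^[n] f) z‖ ≤ M * (1 + Real.log n) * ⨆ w : closedBall (0 : ℂ) 1, ‖f w‖ := by
  refine ⟨2, two_pos, fun n hn f hd hc z hz => ?_⟩
  set S := ⨆ w : closedBall (0 : ℂ) 1, ‖f w‖
  have hbdd : BddAbove (Set.range fun w : closedBall (0 : ℂ) 1 => ‖f w‖) := by
    simpa [Set.image_eq_range] using (isCompact_closedBall (0 : ℂ) 1).bddAbove_image hc.norm
  have hS : ∀ w ∈ closedBall (0 : ℂ) 1, ‖f w‖ ≤ S := fun w hw => le_ciSup hbdd ⟨w, hw⟩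
  have hS_nonneg : 0 ≤ S := (norm_nonneg _).trans (hS 0 (mem_closedBall_self zero_le_one))
  have hlog : 0 ≤ Real.log n := Real.log_nonneg (by exact_mod_cast hn)
  have hclosure : closure (ball (0 : ℂ) 1) = closedBall 0 1 := closure_ball 0 one_ne_zero
  have hf : DiffContOnCl ℂ f (ball 0 1) := ⟨hd, hclosure ▸ hc⟩
  have hDf : DiffContOnCl ℂ (Dop^[n] f) (ball 0 1) :=
    Dop_eq_swap_dslope ▸ hf.iterate_dslope (ball_mem_nhds 0 one_pos) n
  refine norm_le_of_forall_mem_frontier_norm_le isBounded_ball hDf (fun w hw => ?_) (hclosure ▸ hz)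
  rw [frontier_ball 0 one_ne_zero, mem_sphere_zero_iff_norm] at hw
  calc ‖Dop^[n] f w‖ ≤ (2 + Real.log n) * S := norm_Dop_iterate_le_of_norm_eq_one hf
        (fun w hw => hS w (sphere_subset_closedBall hw)) hn hw
    _ ≤ 2 * (1 + Real.log n) * S := by nlinarith
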